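/- arXiv:1210.6930 — 7 statements merged into one kernel-verified Lean document; each statement's English description precedes it below -/
import Mathlib

section
/- Let A ⊆ ℕ^n be a finite set and K ⊆ ℝ^n. An A-truncated multisequence y ∈ ℝ^A admits a representing nonnegative Borel measure supported in K if and only if it admits a finitely atomic representing measure supported in K with at most |A| atoms, i.e., y = Σ_{i=1}^r c_i (u_i^α)_{α∈A} with r ≤ |A|, c_i > 0, u_i ∈ K. -/
/-!
This is the Richter–Tchakaloff theorem. For an integrable `f : X → E` into a finite-dimensional
space and a set `T` of full measure, `∫ f dμ` lies in the convex cone generated by `f '' T`: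
otherwise a functional `ℓ ≠ 0` separates the integral from the cone, so `ℓ ∘ f ≤ 0` a.e. while
`∫ ℓ ∘ f ≥ 0`; hence `f` takes values a.e. in `ker ℓ`, and induction on the dimension applies.
Carathéodory's theorem for cones cuts the combination down to `dim E` points. Applied to
`f x = (x ^ α)_{α ∈ A}` this gives at most `|A|` atoms; conversely, atoms give a sum of Dirac
masses.
-/

open MeasureTheory Module Finset

section Caratheodory

variable {𝕜 E : Type*} [Field 𝕜] [LinearOrder 𝕜] [IsStrictOrderedRing 𝕜]
  [AddCommGroup E] [Module 𝕜 E]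

theorem exists_erase_sum_smul_eq_of_not_linearIndepOn [DecidableEq E] {t : Finset E}
    (h : ¬LinearIndepOn 𝕜 id (t : Set E)) {c : E → 𝕜} (hc : ∀ v ∈ t, 0 ≤ c v) :
    ∃ v₀ ∈ t, ∃ c' : E → 𝕜, (∀ v ∈ t.erase v₀, 0 ≤ c' v) ∧
      ∑ v ∈ t.erase v₀, c' v • v = ∑ v ∈ t, c v • v := by
  obtain ⟨g, hg, i, hi, hgi⟩ := not_linearIndepOn_finset_iff.1 h
  obtain ⟨g, hg, hpos⟩ : ∃ g : E → 𝕜, ∑ v ∈ t, g v • v = 0 ∧ ∃ v ∈ t, 0 < g v := by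
    rcases hgi.lt_or_gt with hneg | hpos
    · exact ⟨-g, by simpa using hg, i, hi, by simpa using hneg⟩
    · exact ⟨g, hg, i, hi, hpos⟩
  obtain ⟨v₀, hv₀, hmin⟩ := {v ∈ t | 0 < g v}.exists_min_image (fun v => c v / g v)
    (by simpa [Finset.Nonempty] using hpos)
  obtain ⟨hv₀t, hgv₀⟩ := mem_filter.1 hv₀
  set k : E → 𝕜 := fun v => c v - c v₀ / g v₀ * g v
  have hk₀ : k v₀ = 0 := by simp [k, hgv₀.ne']
  refine ⟨v₀, hv₀t, k, fun v hv => ?_, ?_⟩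
  · have hvt := mem_of_mem_erase hv
    rcases le_or_gt (g v) 0 with hgv | hgv
    · have : 0 ≤ c v₀ / g v₀ := div_nonneg (hc v₀ hv₀t) hgv₀.le
      nlinarith [hc v hvt]
    · have := hmin v (mem_filter.2 ⟨hvt, hgv⟩)
      rw [div_le_div_iff₀ hgv₀ hgv] at this
      simp only [k, sub_nonneg]
      rw [div_mul_eq_mul_div, div_le_iff₀ hgv₀]
      linarith
  · rw [sum_erase _ (by rw [hk₀, zero_smul])]
    simp only [k, sub_smul, mul_smul, sum_sub_distrib, ← smul_sum, hg, smul_zero, sub_zero]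

theorem exists_subset_card_le_finrank_sum_smul_eq [FiniteDimensional 𝕜 E] (t : Finset E)
    (c : E → 𝕜) (hc : ∀ v ∈ t, 0 ≤ c v) :
    ∃ s ⊆ t, ∃ c' : E → 𝕜, #s ≤ finrank 𝕜 E ∧ (∀ v ∈ s, 0 < c' v) ∧
      ∑ v ∈ s, c' v • v = ∑ v ∈ t, c v • v := by
  classical
  induction t using Finset.strongInduction generalizing c with
  | H t ih =>
  by_cases hli : LinearIndepOn 𝕜 id (t : Set E)
  · refine ⟨{v ∈ t | 0 < c v}, filter_subset _ _, c,
      (card_filter_le _ _).trans hli.finset_card_le_finrank, fun v hv => (mem_filter.1 hv).2, ?_⟩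
    refine sum_filter_of_ne fun v hv hne => (hc v hv).lt_of_ne' ?_
    exact fun h => hne (by rw [h, zero_smul])
  · obtain ⟨v₀, hv₀, c', hc', hsum⟩ := exists_erase_sum_smul_eq_of_not_linearIndepOn hli hc
    obtain ⟨s, hs, c'', hcard, hpos, hsum'⟩ := ih _ (erase_ssubset hv₀) c' hc'
    exact ⟨s, hs.trans (erase_subset _ _), c'', hcard, hpos, hsum'.trans hsum⟩

theorem PointedCone.exists_fin_sum_smul_eq_of_mem_hull_image [FiniteDimensional 𝕜 E]
    {X : Type*} {f : X → E} {T : Set X} {x : E} (hx : x ∈ PointedCone.hull 𝕜 (f '' T)) :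
    ∃ (r : ℕ) (c : Fin r → 𝕜) (u : Fin r → X), r ≤ finrank 𝕜 E ∧ (∀ i, 0 < c i) ∧
      (∀ i, u i ∈ T) ∧ ∑ i, c i • f (u i) = x := by
  obtain ⟨c, hsupp, hc, rfl⟩ := PointedCone.mem_hull_set.1 hx
  obtain ⟨s, hs, c', hcard, hpos, hsum⟩ :=
    exists_subset_card_le_finrank_sum_smul_eq c.support c fun v _ => hc v
  choose u huT hfu using fun v : s => hsupp (hs v.2)
  set e := s.equivFin.symm
  refine ⟨#s, fun i => c' (e i), fun i => u (e i), hcard, fun i => hpos _ (e i).2,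
    fun i => huT _, ?_⟩
  simp only [hfu]
  rw [Finsupp.sum, ← hsum, ← s.sum_coe_sort]
  exact e.sum_comp (fun v => c' v • (v : E))

end Caratheodory

section Tchakaloff

variable {E : Type*} [NormedAddCommGroup E] [NormedSpace ℝ E] [FiniteDimensional ℝ E]

theorem PointedCone.exists_strongDual_nonpos_of_notMem {C : PointedCone ℝ E} {x : E}
    (hx : x ∉ C) : ∃ ℓ : StrongDual ℝ E, ℓ ≠ 0 ∧ (∀ v ∈ C, ℓ v ≤ 0) ∧ 0 ≤ ℓ x := by
  by_cases hC : (interior (C : Set E)).Nonempty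
  · obtain ⟨ℓ, hℓ0, hℓ⟩ :=
      geometric_hahn_banach_of_nonempty_interior_point C.convex
        (fun h => hx (interior_subset h)) hC
    have hℓx : 0 ≤ ℓ x := by simpa using hℓ 0 C.zero_mem
    refine ⟨ℓ, hℓ0, fun v hv => ?_, hℓx⟩
    by_contra! hℓv
    -- a functional bounded above on a cone is nonpositive on it
    have := hℓ (((ℓ x + 1) / ℓ v) • v) (C.smul_mem (by positivity) hv)
    rw [map_smul, smul_eq_mul, div_mul_cancel₀ _ hℓv.ne'] at this
    linarith
  · have hspan : Submodule.span ℝ (C : Set E) < ⊤ := by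
      refine lt_top_iff_ne_top.2 fun htop => hC ?_
      rw [C.convex.interior_nonempty_iff_affineSpan_eq_top,
        AffineSubspace.affineSpan_eq_top_iff_vectorSpan_eq_top_of_nonempty ℝ E E ⟨0, C.zero_mem⟩,
        vectorSpan_eq_span_vsub_set_right ℝ C.zero_mem]
      simpa using htop
    obtain ⟨φ, hφ0, hφC⟩ := Submodule.exists_le_ker_of_lt_top _ hspan
    have hφ : ∀ v ∈ C, φ v = 0 := fun v hv => hφC (Submodule.subset_span hv)
    have hℓ0 : LinearMap.toContinuousLinearMap φ ≠ 0 := by simpa using hφ0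
    rcases le_total 0 (φ x) with hφx | hφx
    · exact ⟨LinearMap.toContinuousLinearMap φ, hℓ0, fun v hv => by simp [hφ v hv], by simpa⟩
    · exact ⟨-LinearMap.toContinuousLinearMap φ, neg_ne_zero.2 hℓ0,
        fun v hv => by simp [hφ v hv], by simpa⟩

theorem integral_mem_hull_image {X : Type*} [MeasurableSpace X] {μ : Measure X} {f : X → E}
    {T : Set X} (hf : Integrable f μ) (hT : ∀ᵐ x ∂μ, x ∈ T) :
    ∫ x, f x ∂μ ∈ PointedCone.hull ℝ (f '' T) := by
  obtain ⟨n, hn⟩ : ∃ n, finrank ℝ E = n := ⟨_, rfl⟩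
  induction n using Nat.strong_induction_on generalizing E T with
  | _ n ih =>
  by_contra hm
  obtain ⟨ℓ, hℓ0, hℓC, hℓm⟩ := PointedCone.exists_strongDual_nonpos_of_notMem hm
  have hℓf : ∀ᵐ x ∂μ, ℓ (f x) ≤ 0 :=
    hT.mono fun x hx => hℓC _ (PointedCone.subset_hull ⟨x, hx, rfl⟩)
  have hℓf_int : ∫ x, ℓ (f x) ∂μ = ℓ (∫ x, f x ∂μ) := ℓ.integral_comp_comm hf
  have hℓf0 : ∀ᵐ x ∂μ, ℓ (f x) = 0 := by
    have hnonneg : 0 ≤ᵐ[μ] fun x => -ℓ (f x) := hℓf.mono fun x hx => neg_nonneg.2 hx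
    have h0 : ∫ x, -ℓ (f x) ∂μ = 0 :=
      le_antisymm (by rw [integral_neg, hℓf_int]; linarith) (integral_nonneg_of_ae hnonneg)
    filter_upwards [(integral_eq_zero_iff_of_nonneg_ae hnonneg (ℓ.integrable_comp hf).neg).1 h0]
      with x hx
    simpa using hx
  have hmV : ∫ x, f x ∂μ ∈ ℓ.ker := by
    change ℓ _ = 0
    rw [← hℓf_int, integral_eq_zero_of_ae hℓf0]
  obtain ⟨P, hP⟩ := ℓ.ker_closedComplemented_of_finiteDimensional_range
  have hV : finrank ℝ ℓ.ker < n :=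
    hn ▸ Submodule.finrank_lt fun h =>
      hℓ0 (ContinuousLinearMap.coe_injective (LinearMap.ker_eq_top.1 h))
  have hPm := ih _ hV (P.integrable_comp hf) (hT.and hℓf0) rfl
  rw [P.integral_comp_comm hf] at hPm
  have := Submodule.apply_mem_span_image_of_mem_span
    (ℓ.ker.subtype.restrictScalars {c : ℝ // 0 ≤ c}) hPm
  refine hm (Submodule.span_mono ?_ (by simpa [hP ⟨_, hmV⟩] using this))
  rintro _ ⟨_, ⟨x, ⟨hxT, hx0⟩, rfl⟩, rfl⟩
  exact ⟨x, hxT, (congrArg Subtype.val (hP ⟨f x, hx0⟩)).symm⟩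

end Tchakaloff

section FinitelyAtomic

variable {ι X E : Type*} [MeasurableSpace X] [MeasurableSingletonClass X]
  [NormedAddCommGroup E] (s : Finset ι) (c : ι → ℝ) (u : ι → X)

theorem finsetSum_smul_dirac_apply_eq_zero {K : Set X} (hu : ∀ i ∈ s, u i ∉ K) :
    (∑ i ∈ s, ENNReal.ofReal (c i) • Measure.dirac (u i)) K = 0 := by
  simpa [Measure.dirac_apply] using fun i hi => Or.inr (hu i hi)

theorem integrable_finsetSum_smul_dirac (f : X → E) :
    Integrable f (∑ i ∈ s, ENNReal.ofReal (c i) • Measure.dirac (u i)) :=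
  integrable_finsetSum_measure.2 fun i _ =>
    (integrable_dirac (by simp)).smul_measure ENNReal.ofReal_ne_top

theorem integral_finsetSum_smul_dirac [NormedSpace ℝ E] [CompleteSpace E]
    (hc : ∀ i ∈ s, 0 ≤ c i) (f : X → E) :
    ∫ x, f x ∂(∑ i ∈ s, ENNReal.ofReal (c i) • Measure.dirac (u i)) =
      ∑ i ∈ s, c i • f (u i) := by
  rw [integral_finsetSum_measure fun i _ =>
    (integrable_dirac (by simp)).smul_measure ENNReal.ofReal_ne_top]
  refine sum_congr rfl fun i hi => ?_
  rw [integral_smul_measure, integral_dirac, ENNReal.toReal_ofReal (hc i hi)]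

end FinitelyAtomic

/-- An `A`-truncated multisequence `y ∈ ℝ^A` admits a representing
nonnegative Borel measure supported in `K` iff it admits a finitely atomic representing
measure supported in `K` with at most `|A|` atoms. -/
theorem atms_admits_measure_iff_finitely_atomic
    (n : ℕ) (A : Finset (Fin n → ℕ)) (K : Set (Fin n → ℝ)) (y : (Fin n → ℕ) → ℝ) :
    (∃ μ : Measure (Fin n → ℝ), μ Kᶜ = 0 ∧
      ∀ α ∈ A, Integrable (fun x => ∏ j, x j ^ α j) μ ∧
        y α = ∫ x, ∏ j, x j ^ α j ∂μ) ↔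
    (∃ (r : ℕ) (c : Fin r → ℝ) (u : Fin r → (Fin n → ℝ)),
      r ≤ A.card ∧ (∀ i, 0 < c i) ∧ (∀ i, u i ∈ K) ∧
      ∀ α ∈ A, y α = ∑ i, c i * ∏ j, u i j ^ α j) := by
  constructor
  · rintro ⟨μ, hK, hμ⟩
    let f : (Fin n → ℝ) → (A → ℝ) := fun x α => ∏ j, x j ^ (α : Fin n → ℕ) j
    have hf : ∀ α : A, Integrable (f · α) μ := fun α => (hμ α α.2).1
    obtain ⟨r, c, u, hr, hc, hu, hsum⟩ := PointedCone.exists_fin_sum_smul_eq_of_mem_hull_image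
      (integral_mem_hull_image (Integrable.of_eval hf) (ae_iff.2 hK))
    refine ⟨r, c, u, by simpa using hr, hc, hu, fun α hα => ?_⟩
    rw [(hμ α hα).2, ← eval_integral hf ⟨α, hα⟩, ← hsum]
    simp [f]
  · rintro ⟨r, c, u, -, hc, hu, hy⟩
    refine ⟨∑ i, ENNReal.ofReal (c i) • Measure.dirac (u i),
      finsetSum_smul_dirac_apply_eq_zero _ _ _ fun i _ h => h (hu i),
      fun α hα => ⟨integrable_finsetSum_smul_dirac _ _ _ _, ?_⟩⟩
    rw [integral_finsetSum_smul_dirac _ _ _ fun i _ => (hc i).le, hy α hα]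
    rfl
end

section
/- Let K ⊆ ℝ^n be compact, A ⊆ ℕ^n finite, and suppose ℝ[x]_A is K-full (there exists p ∈ ℝ[x]_A with p > 0 on K). If an A-tms y ∈ ℝ^A admits no representing measure supported in K, then there exists a polynomial p ∈ ℝ[x]_A with p ≥ 0 on K and the Riesz functional value L_y(p) = Σ_{α∈A} p_α y_α < 0. -/
/-!
The moment vectors of measures supported in `K` form a convex cone containing every point
evaluation `(x^α)_{α ∈ A}`, `x ∈ K`, so `y` lies outside the cone spanned by these evaluations.
Since some `ℓ ∈ ℝ[x]_A` is positive on `K`, rescaling the evaluations to the hyperplane `ℓ = 1`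
gives a compact set whose convex hull (with `0`) is compact by Carathéodory. Separating a small
multiple of `y` from it by Hahn–Banach and correcting the functional by a multiple of `ℓ`
gives a functional positive on the evaluations and negative at `y`.
-/

open MeasureTheory Set

section Convexity

variable {E : Type*} [NormedAddCommGroup E] [NormedSpace ℝ E]

theorem convexHull_range_eq_image_stdSimplex {ι : Type*} [Fintype ι] (v : ι → E) :
    convexHull ℝ (range v) = Fintype.linearCombination ℝ v '' stdSimplex ℝ ι := by
  classical
  rw [← convexHull_rangle_single_eq_stdSimplex, LinearMap.image_convexHull, ← range_comp]
  congr 2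
  ext i
  simp

theorem IsCompact.convexHull [FiniteDimensional ℝ E] {s : Set E} (hs : IsCompact s) :
    IsCompact (convexHull ℝ s) := by
  classical
  set d := Module.finrank ℝ E + 1
  suffices _root_.convexHull ℝ s = (fun p : (Fin d → ℝ) × (Fin d → E) => ∑ i, p.1 i • p.2 i) ''
      (stdSimplex ℝ (Fin d) ×ˢ univ.pi fun _ => s) by
    rw [this]
    exact ((isCompact_stdSimplex ℝ _).prod (isCompact_univ_pi fun _ => hs)).image (by fun_prop)
  refine Subset.antisymm (fun x hx => ?_) ?_
  · rw [convexHull_eq_union] at hx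
    simp only [mem_iUnion] at hx
    obtain ⟨t, hts, ht, hxt⟩ := hx
    have htd : Fintype.card t ≤ d :=
      ht.card_le_finrank_succ.trans (Nat.succ_le_succ (Submodule.finrank_le _))
    obtain ⟨e⟩ : Nonempty (t ↪ Fin d) :=
      Function.Embedding.nonempty_of_card_le (by simpa using htd)
    have : Nonempty t := (convexHull_nonempty_iff.mp ⟨x, hxt⟩).coe_sort
    -- list the at most `d` points of `t` as `d` points, with repetitions
    set v : Fin d → E := Subtype.val ∘ Function.invFun e
    have hv : range v = t := by
      rw [range_comp, (Function.invFun_surjective e.injective).range_eq, image_univ,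
        Subtype.range_coe]
    rw [← hv, convexHull_range_eq_image_stdSimplex] at hxt
    obtain ⟨w, hw, rfl⟩ := hxt
    exact ⟨(w, v), ⟨hw, fun i _ => hts (hv ▸ mem_range_self i)⟩, rfl⟩
  · rintro _ ⟨⟨w, z⟩, ⟨⟨hw₀, hw₁⟩, hz⟩, rfl⟩
    exact (convex_convexHull ℝ s).sum_mem (fun i _ => hw₀ i) hw₁
      fun i _ => subset_convexHull ℝ s (hz i (mem_univ i))

theorem PointedCone.exists_dual_pos_and_neg_of_notMem_hull [FiniteDimensional ℝ E] {S : Set E}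
    (hS : IsCompact S) (ℓ : Module.Dual ℝ E) (hℓ : ∀ s ∈ S, 0 < ℓ s) {z : E}
    (hz : z ∉ PointedCone.hull ℝ S) :
    ∃ f : Module.Dual ℝ E, (∀ s ∈ S, 0 < f s) ∧ f z < 0 := by
  set C := convexHull ℝ (insert 0 ((fun s => (ℓ s)⁻¹ • s) '' S))
  have hC : IsCompact C := by
    refine (IsCompact.insert (hS.image_of_continuousOn ?_) 0).convexHull
    exact ((LinearMap.continuous_of_finiteDimensional ℓ).continuousOn.inv₀
      fun s hs => (hℓ s hs).ne').smul continuousOn_id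
  have hC_hull : C ⊆ PointedCone.hull ℝ S := by
    refine convexHull_min (insert_subset (PointedCone.hull ℝ S).zero_mem ?_)
      (PointedCone.convex _)
    rintro _ ⟨s, hs, rfl⟩
    exact (PointedCone.hull ℝ S).smul_mem (inv_nonneg.mpr (hℓ s hs).le)
      (PointedCone.subset_hull hs)
  -- `c` makes `c * ℓ z < 1`, which is what turns `f - u • ℓ` negative at `z`
  obtain ⟨c, hc, hcz⟩ := exists_pos_mul_lt one_pos (ℓ z)
  have hcz_C : c • z ∉ C := fun h => hz (((PointedCone.hull ℝ S).smul_mem_iff hc).mp (hC_hull h))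
  obtain ⟨f, u, hfz, hfC⟩ :=
    geometric_hahn_banach_point_closed (convex_convexHull ℝ _) hC.isClosed hcz_C
  have hu : u < 0 := by simpa using hfC 0 (subset_convexHull ℝ _ (mem_insert 0 _))
  refine ⟨(f : E →ₗ[ℝ] ℝ) - u • ℓ, fun s hs => ?_, ?_⟩
  · have hfs := hfC _ (subset_convexHull ℝ _ (mem_insert_of_mem 0 ⟨s, hs, rfl⟩))
    rw [map_smul, smul_eq_mul, lt_inv_mul_iff₀ (hℓ s hs)] at hfs
    simp only [LinearMap.sub_apply, ContinuousLinearMap.coe_coe, LinearMap.smul_apply,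
      smul_eq_mul]
    linarith
  · rw [map_smul, smul_eq_mul] at hfz
    simp only [LinearMap.sub_apply, ContinuousLinearMap.coe_coe, LinearMap.smul_apply,
      smul_eq_mul]
    nlinarith

end Convexity

section MomentCone

variable {X ι : Type*} [MeasurableSpace X]

def momentCone (φ : ι → X → ℝ) (K : Set X) : PointedCone ℝ (ι → ℝ) where
  carrier := {m | ∃ μ : Measure X, μ Kᶜ = 0 ∧ ∀ i, Integrable (φ i) μ ∧ m i = ∫ x, φ i x ∂μ}
  zero_mem' := ⟨0, rfl, fun _ => ⟨integrable_zero_measure, by simp⟩⟩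
  add_mem' := by
    rintro _ _ ⟨μ, hμK, hμ⟩ ⟨ν, hνK, hν⟩
    refine ⟨μ + ν, by simp [hμK, hνK], fun i => ⟨(hμ i).1.add_measure (hν i).1, ?_⟩⟩
    simp [integral_add_measure (hμ i).1 (hν i).1, (hμ i).2, (hν i).2]
  smul_mem' := by
    rintro ⟨c, hc⟩ _ ⟨μ, hμK, hμ⟩
    refine ⟨c.toNNReal • μ, by simp [hμK], fun i => ⟨(hμ i).1.smul_measure_nnreal, ?_⟩⟩
    simp [integral_smul_nnreal_measure, NNReal.smul_def, (hμ i).2, hc]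

theorem hull_eval_le_momentCone [MeasurableSingletonClass X] (φ : ι → X → ℝ) (K : Set X) :
    PointedCone.hull ℝ ((fun x i => φ i x) '' K) ≤ momentCone φ K := by
  refine Submodule.span_le.mpr ?_
  rintro _ ⟨x, hx, rfl⟩
  refine ⟨Measure.dirac x, by simpa [Measure.dirac_apply] using hx, fun i => ⟨?_, ?_⟩⟩
  · exact integrable_dirac enorm_lt_top
  · rw [integral_dirac]

end MomentCone

theorem Finset.sum_mul_eq_dotProduct {ι R : Type*} [CommSemiring R] (s : Finset ι)
    (p g : ι → R) : ∑ i ∈ s, p i * g i = (fun i : s => p i) ⬝ᵥ (fun i : s => g i) :=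
  (s.sum_coe_sort _).symm

/-- If `K` is compact, `ℝ[x]_A` is `K`-full, and the `A`-tms `y`
admits no representing measure supported in `K`, then there is `p ∈ ℝ[x]_A`
nonnegative on `K` with `L_y(p) < 0`. -/
theorem exists_separating_poly_of_no_measure
    (n : ℕ) (A : Finset (Fin n → ℕ)) (K : Set (Fin n → ℝ)) (hK : IsCompact K)
    (hfull : ∃ p : (Fin n → ℕ) → ℝ, ∀ x ∈ K, 0 < ∑ α ∈ A, p α * ∏ j, x j ^ α j)
    (y : (Fin n → ℕ) → ℝ)
    (hno : ¬ ∃ μ : Measure (Fin n → ℝ), μ Kᶜ = 0 ∧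
      ∀ α ∈ A, Integrable (fun x => ∏ j, x j ^ α j) μ ∧
        y α = ∫ x, ∏ j, x j ^ α j ∂μ) :
    ∃ p : (Fin n → ℕ) → ℝ,
      (∀ x ∈ K, 0 ≤ ∑ α ∈ A, p α * ∏ j, x j ^ α j) ∧
      ∑ α ∈ A, p α * y α < 0 := by
  classical
  obtain ⟨p₀, hp₀⟩ := hfull
  set φ : A → (Fin n → ℝ) → ℝ := fun α x => ∏ j, x j ^ (α : Fin n → ℕ) j
  set S := (fun x α => φ α x) '' K
  have hS : IsCompact S := hK.image (by fun_prop)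
  have hℓ : ∀ s ∈ S, 0 < dotProductEquiv ℝ A (fun α => p₀ α) s := by
    rintro _ ⟨x, hx, rfl⟩
    simpa [Finset.sum_mul_eq_dotProduct] using hp₀ x hx
  have hy : (fun α : A => y α) ∉ PointedCone.hull ℝ S := fun h => hno <| by
    obtain ⟨μ, hμK, hμ⟩ := hull_eval_le_momentCone φ K h
    exact ⟨μ, hμK, fun α hα => hμ ⟨α, hα⟩⟩
  obtain ⟨f, hfS, hfy⟩ := PointedCone.exists_dual_pos_and_neg_of_notMem_hull hS _ hℓ hy
  obtain ⟨q, rfl⟩ := (dotProductEquiv ℝ A).surjective f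
  have hq : (fun α : A => Function.extend Subtype.val q 0 α) = q :=
    funext (Subtype.val_injective.extend_apply q 0)
  refine ⟨Function.extend Subtype.val q 0, fun x hx => ?_, ?_⟩
  · simpa [Finset.sum_mul_eq_dotProduct, hq] using (hfS _ ⟨x, hx, rfl⟩).le
  · simpa [Finset.sum_mul_eq_dotProduct, hq] using hfy
end

section
/- Let K ⊆ ℝ^n, A ⊆ ℕ^n finite, d > deg(A), and y an A-tms admitting a K-measure. If z is an extreme point of the convex set E_d(y,K) = { z ∈ ℝ^{ℕ^n_d} : z admits a K-measure and z|_A = y }, then every K-measure representing z is r-atomic with r ≤ |A|. -/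
/-!
If `μ` represents the extreme point `z` and a bounded test function `g` is `μ`-orthogonal to the
monomials `x^α`, `α ∈ A`, then the measures `(1 ± c g) μ` (for small `c > 0`) represent two points
of `E_d(y,K)` with midpoint `z`, so extremality makes `g` orthogonal to every monomial of degree
`≤ d`. By duality each such monomial agrees `μ`-a.e. with a combination of the `x^α`, `α ∈ A`, and
since `deg A < d` multiplying by coordinates propagates this to all polynomials. Hence, modulo
`μ`-null functions, polynomials span a space of dimension `≤ |A|`: every coordinate satisfies a
nontrivial polynomial equation a.e., so `μ` lives on a finite set, and interpolating on its atoms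
shows that there are at most `|A|` of them.
-/

open MeasureTheory

/-- The extension set `E_d(y,K)`: truncated moment sequences of degree `d`
(padded by zero in degrees `> d`) that admit a representing measure supported
in `K` and agree with `y` on `A`. -/
def extensionSet (n d : ℕ) (A : Finset (Fin n → ℕ)) (K : Set (Fin n → ℝ))
    (y : (Fin n → ℕ) → ℝ) : Set ((Fin n → ℕ) → ℝ) :=
  {z | (∃ μ : Measure (Fin n → ℝ), μ Kᶜ = 0 ∧
          ∀ α : Fin n → ℕ, (∑ j, α j) ≤ d →
            Integrable (fun x => ∏ j, x j ^ α j) μ ∧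
              z α = ∫ x, ∏ j, x j ^ α j ∂μ) ∧
        (∀ α ∈ A, z α = y α) ∧
        (∀ α : Fin n → ℕ, ¬ (∑ j, α j) ≤ d → z α = 0)}

open scoped BoundedContinuousFunction

section TestFunctions

variable {X : Type*} [TopologicalSpace X] [MeasurableSpace X] [OpensMeasurableSpace X]
  {μ : Measure X} {f : X → ℝ}

lemma MeasureTheory.Integrable.mul_boundedContinuousFunction (hf : Integrable f μ) (g : X →ᵇ ℝ) :
    Integrable (fun x => f x * g x) μ :=
  hf.mul_bdd g.continuous.aestronglyMeasurable (.of_forall g.norm_coe_le_norm)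

noncomputable def integralMulLM (μ : Measure X) (hf : Integrable f μ) : (X →ᵇ ℝ) →ₗ[ℝ] ℝ where
  toFun g := ∫ x, f x * g x ∂μ
  map_add' g h := by
    simp only [BoundedContinuousFunction.coe_add, Pi.add_apply, mul_add]
    exact integral_add (hf.mul_boundedContinuousFunction g) (hf.mul_boundedContinuousFunction h)
  map_smul' c g := by
    simp only [BoundedContinuousFunction.coe_smul, smul_eq_mul, RingHom.id_apply,
      mul_left_comm _ c]
    exact integral_const_mul c _

lemma ae_eq_zero_of_forall_integral_mul_eq_zero (hfc : Continuous f) (hf : Integrable f μ)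
    (h : ∀ g : X →ᵇ ℝ, ∫ x, f x * g x ∂μ = 0) : f =ᵐ[μ] 0 := by
  have hpos : ∀ x, 0 < 1 + |f x| := fun x => by positivity
  let g : X →ᵇ ℝ := .ofNormedAddCommGroup (fun x => f x / (1 + |f x|))
    (hfc.div (continuous_const.add hfc.abs) fun x => (hpos x).ne') 1 fun x => by
      rw [Real.norm_eq_abs, abs_div, abs_of_pos (hpos x), div_le_one (hpos x)]
      linarith
  have hfg : ∀ x, f x * g x = f x ^ 2 / (1 + |f x|) := fun x => by
    simp only [g, BoundedContinuousFunction.coe_ofNormedAddCommGroup]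
    ring
  have hnonneg : 0 ≤ fun x => f x * g x := fun x => by
    simp only [Pi.zero_apply, hfg]
    exact div_nonneg (sq_nonneg _) (hpos x).le
  filter_upwards [(integral_eq_zero_iff_of_nonneg hnonneg
    (hf.mul_boundedContinuousFunction g)).1 (h g)] with x hx
  simpa [hfg, (hpos x).ne'] using hx

end TestFunctions

section Measures

variable {X : Type*} [MeasurableSpace X]

def aeNull (μ : Measure X) : Submodule ℝ (X → ℝ) where
  carrier := {f | f =ᵐ[μ] 0}
  add_mem' {f g} hf hg := by
    show f + g =ᵐ[μ] 0
    filter_upwards [hf, hg] with x hfx hgx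
    simp [hfx, hgx]
  zero_mem' := ae_eq_refl 0
  smul_mem' c f hf := by
    show c • f =ᵐ[μ] 0
    filter_upwards [hf] with x hx
    simp [hx]

lemma apply_eq_zero_of_mem_aeNull {μ : Measure X} {f : X → ℝ}
    (hf : f ∈ aeNull μ) {t : X} (ht : μ {t} ≠ 0) : f t = 0 := by
  by_contra hft
  exact ht (measure_mono_null (by simpa using hft) (ae_iff.1 hf))

lemma integrable_and_integral_withDensity_one_add {μ : Measure X} {g f : X → ℝ} (hg : Measurable g)
    (hg1 : ∀ x, |g x| ≤ 1) (hf : Integrable f μ) :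
    Integrable f (μ.withDensity fun x => Real.toNNReal (1 + g x)) ∧
      ∫ x, f x ∂μ.withDensity (fun x => Real.toNNReal (1 + g x)) =
        ∫ x, f x ∂μ + ∫ x, f x * g x ∂μ := by
  have hdens : Measurable fun x => Real.toNNReal (1 + g x) :=
    (measurable_const.add hg).real_toNNReal
  have hsmul : (fun x => Real.toNNReal (1 + g x) • f x) = fun x => f x + f x * g x := by
    funext x
    rw [NNReal.smul_def, Real.coe_toNNReal _ (by linarith [neg_abs_le (g x), hg1 x]),
      smul_eq_mul]
    ring
  have hfg : Integrable (fun x => f x * g x) μ :=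
    hf.mul_bdd hg.aestronglyMeasurable (.of_forall fun x => by simpa using hg1 x)
  refine ⟨(integrable_withDensity_iff_integrable_smul hdens).2 ?_, ?_⟩
  · rw [hsmul]
    exact hf.add hfg
  · rw [integral_withDensity_eq_integral_smul hdens, hsmul, integral_add hf hfg]

lemma exists_finset_atoms_of_finite {μ : Measure X} {F : Set X}
    (hF : F.Finite) (hμF : μ Fᶜ = 0) : ∃ T : Finset X, μ (↑T)ᶜ = 0 ∧ ∀ t ∈ T, μ {t} ≠ 0 := by
  classical
  set T := hF.toFinset.filter fun t => μ {t} ≠ 0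
  have hdiff : μ (F \ T) = 0 :=
    (measure_null_iff_singleton (hF.subset Set.sdiff_subset).countable).2 fun t ht => by
      by_contra h
      exact ht.2 (by simp [T, ht.1, h])
  refine ⟨T, measure_mono_null (fun x hx => ?_) (measure_union_null hμF hdiff),
    fun t ht => (Finset.mem_filter.1 ht).2⟩
  by_cases hxF : x ∈ F
  · exact Or.inr ⟨hxF, hx⟩
  · exact Or.inl hxF

end Measures

lemma eq_zero_of_add_mem_of_sub_mem_of_mem_extremePoints {E : Type*} [AddCommGroup E]
    [Module ℝ E] {S : Set E} {x v : E} (hx : x ∈ S.extremePoints ℝ) (hadd : x + v ∈ S)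
    (hsub : x - v ∈ S) : v = 0 := by
  have hmid : x ∈ openSegment ℝ (x + v) (x - v) :=
    ⟨1 / 2, 1 / 2, by norm_num, by norm_num, by norm_num, by module⟩
  simpa using hx.2 hadd hsub hmid

lemma exists_ne_zero_map_mem_of_not_finite {M W : Type*} [AddCommGroup M] [Module ℝ M]
    [AddCommGroup W] [Module ℝ W] (hM : ¬ Module.Finite ℝ M) (Φ : M →ₗ[ℝ] W)
    {S N : Submodule ℝ W} [FiniteDimensional ℝ S] (hΦ : ∀ m, Φ m ∈ S ⊔ N) :
    ∃ m ≠ 0, Φ m ∈ N := by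
  by_contra! h
  let Ψ : M →ₗ[ℝ] S.map N.mkQ := (N.mkQ ∘ₗ Φ).codRestrict _ fun m => by
    obtain ⟨s, hs, t, ht, hst⟩ := Submodule.mem_sup.1 (hΦ m)
    refine ⟨s, hs, ?_⟩
    simp [← hst, (Submodule.Quotient.mk_eq_zero N).2 ht]
  refine hM (Module.Finite.of_injective Ψ fun m m' hmm' => ?_)
  by_contra hne
  refine h (m - m') (sub_ne_zero.2 hne) ((Submodule.Quotient.mk_eq_zero N).1 ?_)
  simpa [Ψ, sub_eq_zero] using congrArg Subtype.val hmm'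

section Polynomials

lemma MvPolynomial.eval_aeval_X {σ R : Type*} [CommSemiring R] (j : σ) (q : Polynomial R)
    (x : σ → R) : eval x (Polynomial.aeval (X j) q) = q.eval (x j) := by
  induction q using Polynomial.induction_on <;> simp_all

variable {σ K : Type*} [Field K]

lemma MvPolynomial.exists_eval_eq_one_eval_eq_zero (T : Finset (σ → K)) (t : σ → K) :
    ∃ p : MvPolynomial σ K, eval t p = 1 ∧ ∀ s ∈ T, s ≠ t → eval s p = 0 := by
  classical
  choose j hj using fun s : T.erase t => Function.ne_iff.1 (Finset.ne_of_mem_erase s.2)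
  refine ⟨∏ s, C (t (j s) - s.1 (j s))⁻¹ * (X (j s) - C (s.1 (j s))), ?_, fun s hs hst => ?_⟩
  · simp only [map_prod, map_mul, map_sub, eval_C, eval_X]
    exact Finset.prod_eq_one fun s _ => inv_mul_cancel₀ (sub_ne_zero.2 (hj s).symm)
  · simp only [map_prod, map_mul, map_sub, eval_C, eval_X]
    exact Finset.prod_eq_zero (Finset.mem_univ ⟨s, Finset.mem_erase.2 ⟨hst, hs⟩⟩) (by simp)

end Polynomials

section Moments

variable {n : ℕ}

def monomialFn (γ : Fin n → ℕ) (x : Fin n → ℝ) : ℝ := ∏ j, x j ^ γ j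

lemma continuous_monomialFn (γ : Fin n → ℕ) : Continuous (monomialFn γ) := by
  unfold monomialFn
  fun_prop

lemma monomialFn_zero : monomialFn (0 : Fin n → ℕ) = 1 := by
  funext x
  simp [monomialFn]

lemma monomialFn_add_single (γ : Fin n → ℕ) (j : Fin n) :
    monomialFn (γ + Pi.single j 1) = monomialFn γ * fun x => x j := by
  funext x
  simp only [monomialFn, Pi.add_apply, pow_add, Finset.prod_mul_distrib, Pi.mul_apply]
  congr 1
  rw [Finset.prod_eq_single j (fun k _ hk => by simp [Pi.single_eq_of_ne hk]) (by simp)]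
  simp

noncomputable def polyEval (n : ℕ) : MvPolynomial (Fin n) ℝ →ₗ[ℝ] (Fin n → ℝ) → ℝ where
  toFun p x := MvPolynomial.eval x p
  map_add' p q := by
    funext x
    simp
  map_smul' c p := by
    funext x
    simp

@[simp]
lemma polyEval_apply (p : MvPolynomial (Fin n) ℝ) (x : Fin n → ℝ) :
    polyEval n p x = MvPolynomial.eval x p :=
  rfl

def monomialSpan (A : Finset (Fin n → ℕ)) : Submodule ℝ ((Fin n → ℝ) → ℝ) :=
  Submodule.span ℝ (Set.range fun α : A => monomialFn (α : Fin n → ℕ))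

lemma finrank_monomialSpan_le (A : Finset (Fin n → ℕ)) :
    Module.finrank ℝ (monomialSpan A) ≤ A.card :=
  (finrank_range_le_card _).trans (Fintype.card_coe A).le

instance (A : Finset (Fin n → ℕ)) : FiniteDimensional ℝ (monomialSpan A) :=
  FiniteDimensional.span_of_finite ℝ (Set.finite_range _)

def RepresentsMoments (d : ℕ) (μ : Measure (Fin n → ℝ)) (z : (Fin n → ℕ) → ℝ) : Prop :=
  ∀ α : Fin n → ℕ, (∑ j, α j) ≤ d →
    Integrable (monomialFn α) μ ∧ z α = ∫ x, monomialFn α x ∂μ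

noncomputable def truncatedMoments (d : ℕ) (μ : Measure (Fin n → ℝ)) (g : (Fin n → ℝ) → ℝ) :
    (Fin n → ℕ) → ℝ :=
  fun γ => if (∑ j, γ j) ≤ d then ∫ x, monomialFn γ x * g x ∂μ else 0

lemma sub_sum_smul_monomialFn_mem_aeNull {μ : Measure (Fin n → ℝ)} {A : Finset (Fin n → ℕ)}
    {β : Fin n → ℕ} (hβ : Integrable (monomialFn β) μ)
    (hA : ∀ α ∈ A, Integrable (monomialFn α) μ) (c : A → ℝ)
    (hc : ∀ g : (Fin n → ℝ) →ᵇ ℝ,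
      ∫ x, monomialFn β x * g x ∂μ = ∑ α : A, c α * ∫ x, monomialFn α x * g x ∂μ) :
    monomialFn β - ∑ α : A, c α • monomialFn (α : Fin n → ℕ) ∈ aeNull μ := by
  set p := ∑ α : A, c α • monomialFn (α : Fin n → ℕ)
  have hpint : Integrable p μ := integrable_finsetSum' _ fun (α : A) _ => (hA α α.2).smul (c α)
  have hpcont : Continuous p := by
    simp only [p, Finset.sum_fn]
    exact continuous_finsetSum _ fun (α : A) _ => (continuous_monomialFn _).const_smul (c α)
  refine ae_eq_zero_of_forall_integral_mul_eq_zero ((continuous_monomialFn β).sub hpcont)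
    (hβ.sub hpint) fun g => ?_
  have hpg : ∫ x, p x * g x ∂μ = ∑ α : A, c α * ∫ x, monomialFn α x * g x ∂μ := by
    simp only [p, Finset.sum_apply, Pi.smul_apply, smul_eq_mul, Finset.sum_mul, mul_assoc]
    rw [integral_finsetSum _ fun (α : A) _ =>
      ((hA α α.2).mul_boundedContinuousFunction g).const_mul (c α)]
    simp_rw [integral_const_mul]
  simp only [Pi.sub_apply, sub_mul]
  rw [integral_sub (hβ.mul_boundedContinuousFunction g) (hpint.mul_boundedContinuousFunction g),
    hpg, hc, sub_self]

section Extension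

variable {d : ℕ} {A : Finset (Fin n → ℕ)} {K : Set (Fin n → ℝ)} {y z : (Fin n → ℕ) → ℝ}
  {μ : Measure (Fin n → ℝ)}

lemma add_truncatedMoments_mem_extensionSet (hd : ∀ α ∈ A, (∑ j, α j) < d)
    (hz : z ∈ extensionSet n d A K y) (hμK : μ Kᶜ = 0) (hμ : RepresentsMoments d μ z)
    {g : (Fin n → ℝ) → ℝ} (hg : Measurable g) (hg1 : ∀ x, |g x| ≤ 1)
    (hgA : ∀ α ∈ A, ∫ x, monomialFn α x * g x ∂μ = 0) :
    z + truncatedMoments d μ g ∈ extensionSet n d A K y := by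
  obtain ⟨-, hzA, hz0⟩ := hz
  refine ⟨⟨μ.withDensity fun x => Real.toNNReal (1 + g x),
    withDensity_absolutelyContinuous μ _ hμK, fun γ hγ => ?_⟩, fun α hα => ?_, fun γ hγ => ?_⟩
  · obtain ⟨hint, hmom⟩ := integrable_and_integral_withDensity_one_add hg hg1 (hμ γ hγ).1
    refine ⟨hint, ?_⟩
    simp only [Pi.add_apply, truncatedMoments, if_pos hγ, (hμ γ hγ).2]
    exact hmom.symm
  · simp [truncatedMoments, (hd α hα).le, hgA α hα, hzA α hα]
  · simp [truncatedMoments, hγ, hz0 γ hγ]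

lemma truncatedMoments_eq_zero_of_mem_extremePoints (hd : ∀ α ∈ A, (∑ j, α j) < d)
    (hz : z ∈ (extensionSet n d A K y).extremePoints ℝ) (hμK : μ Kᶜ = 0)
    (hμ : RepresentsMoments d μ z) {g : (Fin n → ℝ) → ℝ} (hg : Measurable g) (hg1 : ∀ x, |g x| ≤ 1)
    (hgA : ∀ α ∈ A, ∫ x, monomialFn α x * g x ∂μ = 0) :
    truncatedMoments d μ g = 0 := by
  have hneg : truncatedMoments d μ (-g) = -truncatedMoments d μ g := by
    funext γ
    simp only [truncatedMoments, Pi.neg_apply, mul_neg, integral_neg]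
    split_ifs <;> simp
  refine eq_zero_of_add_mem_of_sub_mem_of_mem_extremePoints hz
    (add_truncatedMoments_mem_extensionSet hd hz.1 hμK hμ hg hg1 hgA) ?_
  rw [sub_eq_add_neg, ← hneg]
  exact add_truncatedMoments_mem_extensionSet hd hz.1 hμK hμ hg.neg (by simpa using hg1)
    fun α hα => by simp [integral_neg, hgA α hα]

lemma integral_monomialFn_mul_eq_zero_of_mem_extremePoints (hd : ∀ α ∈ A, (∑ j, α j) < d)
    (hz : z ∈ (extensionSet n d A K y).extremePoints ℝ) (hμK : μ Kᶜ = 0)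
    (hμ : RepresentsMoments d μ z) (g : (Fin n → ℝ) →ᵇ ℝ)
    (hgA : ∀ α ∈ A, ∫ x, monomialFn α x * g x ∂μ = 0) {γ : Fin n → ℕ} (hγ : (∑ j, γ j) ≤ d) :
    ∫ x, monomialFn γ x * g x ∂μ = 0 := by
  -- rescaled so that the densities `1 ± c g` are nonnegative
  set c : ℝ := (‖g‖ + 1)⁻¹
  have hc : 0 < c := by positivity
  have hcg : ∀ x, |c * g x| ≤ 1 := fun x => by
    rw [abs_mul, abs_of_pos hc]
    calc c * |g x| ≤ c * (‖g‖ + 1) := by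
          gcongr
          linarith [g.norm_coe_le_norm x, Real.norm_eq_abs (g x)]
      _ = 1 := inv_mul_cancel₀ (by positivity)
  have h := congrFun (truncatedMoments_eq_zero_of_mem_extremePoints hd hz hμK hμ
    (g.continuous.measurable.const_mul c) hcg fun α hα => by
      simp_rw [mul_left_comm _ c]
      rw [integral_const_mul, hgA α hα, mul_zero]) γ
  simp_rw [truncatedMoments, if_pos hγ, Pi.zero_apply, mul_left_comm _ c,
    integral_const_mul] at h
  exact (mul_eq_zero.1 h).resolve_left hc.ne'

lemma monomialFn_mem_monomialSpan_sup_aeNull (hd : ∀ α ∈ A, (∑ j, α j) < d)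
    (hz : z ∈ (extensionSet n d A K y).extremePoints ℝ) (hμK : μ Kᶜ = 0)
    (hμ : RepresentsMoments d μ z) {β : Fin n → ℕ} (hβ : (∑ j, β j) ≤ d) :
    monomialFn β ∈ monomialSpan A ⊔ aeNull μ := by
  let L : A → ((Fin n → ℝ) →ᵇ ℝ) →ₗ[ℝ] ℝ := fun α => integralMulLM μ (hμ α (hd α α.2).le).1
  have hker : ⨅ α, LinearMap.ker (L α) ≤ LinearMap.ker (integralMulLM μ (hμ β hβ).1) := by
    intro g hg
    simp only [Submodule.mem_iInf, LinearMap.mem_ker] at hg ⊢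
    exact integral_monomialFn_mul_eq_zero_of_mem_extremePoints hd hz hμK hμ g
      (fun α hα => hg ⟨α, hα⟩) hβ
  obtain ⟨c, hc⟩ :=
    (Submodule.mem_span_range_iff_exists_fun ℝ).1 (mem_span_of_iInf_ker_le_ker hker)
  have hcg : ∀ g : (Fin n → ℝ) →ᵇ ℝ,
      ∫ x, monomialFn β x * g x ∂μ = ∑ α : A, c α * ∫ x, monomialFn α x * g x ∂μ := fun g => by
    simpa [L, integralMulLM] using (LinearMap.congr_fun hc g).symm
  set p := ∑ α : A, c α • monomialFn (α : Fin n → ℕ)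
  have hp : p ∈ monomialSpan A :=
    Submodule.sum_mem _ fun α _ => Submodule.smul_mem _ _ (Submodule.subset_span ⟨α, rfl⟩)
  have hnull : monomialFn β - p ∈ aeNull μ :=
    sub_sum_smul_monomialFn_mem_aeNull (hμ β hβ).1 (fun α hα => (hμ α (hd α hα).le).1) c hcg
  simpa [p] using Submodule.add_mem_sup hp hnull

lemma polyEval_mem_monomialSpan_sup_aeNull (hd : ∀ α ∈ A, (∑ j, α j) < d)
    (hmono : ∀ β, (∑ j, β j) ≤ d → monomialFn β ∈ monomialSpan A ⊔ aeNull μ)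
    (p : MvPolynomial (Fin n) ℝ) : polyEval n p ∈ monomialSpan A ⊔ aeNull μ := by
  set V := monomialSpan A ⊔ aeNull μ
  have hmulX : ∀ j, V ≤ V.comap (LinearMap.mulRight ℝ fun x : Fin n → ℝ => x j) := by
    intro j
    refine sup_le (Submodule.span_le.2 ?_) fun f hf => Submodule.mem_sup_right ?_
    · rintro _ ⟨α, rfl⟩
      simp only [SetLike.mem_coe, Submodule.mem_comap, LinearMap.mulRight_apply,
        ← monomialFn_add_single]
      exact hmono _ (by simpa [Finset.sum_add_distrib] using hd α α.2)
    · show _ =ᵐ[μ] 0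
      filter_upwards [hf] with x hx
      simp [hx]
  induction p using MvPolynomial.induction_on with
  | C a =>
    have : polyEval n (MvPolynomial.C a) = a • monomialFn 0 := by
      funext x
      simp [monomialFn_zero]
    rw [this]
    exact V.smul_mem a (hmono 0 (by simp))
  | add p q hp hq => simpa using V.add_mem hp hq
  | mul_X p j hp =>
    have : polyEval n (p * MvPolynomial.X j) = polyEval n p * fun x => x j := by
      funext x
      simp
    rw [this]
    exact hmulX j hp

end Extension

section PolynomialFunctions

variable {μ : Measure (Fin n → ℝ)} {S : Submodule ℝ ((Fin n → ℝ) → ℝ)}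
  [FiniteDimensional ℝ S]

lemma exists_finite_measure_compl_eq_zero (hP : ∀ p, polyEval n p ∈ S ⊔ aeNull μ) :
    ∃ F : Set (Fin n → ℝ), F.Finite ∧ μ Fᶜ = 0 := by
  have hroot : ∀ j : Fin n, ∃ q : Polynomial ℝ, q ≠ 0 ∧ ∀ᵐ x ∂μ, q.IsRoot (x j) := by
    intro j
    obtain ⟨q, hq, hqN⟩ := exists_ne_zero_map_mem_of_not_finite Polynomial.not_finite
      (polyEval n ∘ₗ (Polynomial.aeval (MvPolynomial.X j)).toLinearMap) fun q => hP _
    refine ⟨q, hq, ?_⟩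
    filter_upwards [hqN] with x hx
    simpa [MvPolynomial.eval_aeval_X] using hx
  choose q hq hroot using hroot
  refine ⟨Set.univ.pi fun j => {t | (q j).IsRoot t},
    Set.Finite.pi fun j => Polynomial.finite_setOfPred_isRoot (hq j), mem_ae_iff.1 ?_⟩
  filter_upwards [ae_all_iff.2 hroot] with x hx
  exact fun j _ => hx j

lemma card_le_finrank_of_polyEval_mem (hP : ∀ p, polyEval n p ∈ S ⊔ aeNull μ)
    {T : Finset (Fin n → ℝ)} (hT : ∀ t ∈ T, μ {t} ≠ 0) : T.card ≤ Module.finrank ℝ S := by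
  classical
  let ev : ((Fin n → ℝ) → ℝ) →ₗ[ℝ] T → ℝ := LinearMap.funLeft ℝ ℝ Subtype.val
  have hsingle : ∀ t : T, (fun s => if t = s then 1 else 0) ∈ S.map ev := by
    intro t
    obtain ⟨p, hpt, hps⟩ := MvPolynomial.exists_eval_eq_one_eval_eq_zero T t
    obtain ⟨s, hs, m, hm, hsm⟩ := Submodule.mem_sup.1 (hP p)
    refine ⟨s, hs, funext fun u => ?_⟩
    have hsu : s u = MvPolynomial.eval (u : Fin n → ℝ) p := by
      simpa [apply_eq_zero_of_mem_aeNull hm (hT u u.2)] using congrFun hsm u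
    by_cases htu : t = u
    · subst htu
      simp [ev, hsu, hpt]
    · simp [ev, hsu, htu, hps u u.2 (Ne.symm fun h => htu (Subtype.ext h))]
  have htop : S.map ev = ⊤ := eq_top_iff.2 fun v _ => by
    rw [pi_eq_sum_univ v]
    exact Submodule.sum_mem _ fun t _ => Submodule.smul_mem _ _ (hsingle t)
  calc T.card = Module.finrank ℝ (T → ℝ) := by simp
    _ = Module.finrank ℝ (S.map ev) := by rw [htop, finrank_top]
    _ ≤ Module.finrank ℝ S := Submodule.finrank_map_le ev S

lemma exists_finset_card_le_finrank_of_polyEval_mem (hP : ∀ p, polyEval n p ∈ S ⊔ aeNull μ) :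
    ∃ T : Finset (Fin n → ℝ), T.card ≤ Module.finrank ℝ S ∧ μ (↑T)ᶜ = 0 := by
  obtain ⟨F, hF, hμF⟩ := exists_finite_measure_compl_eq_zero hP
  obtain ⟨T, hμT, hT⟩ := exists_finset_atoms_of_finite hF hμF
  exact ⟨T, card_le_finrank_of_polyEval_mem hP hT, hμT⟩

end PolynomialFunctions

end Moments

theorem measure_of_extremePoint_is_finitely_atomic_general
    (n d : ℕ) (A : Finset (Fin n → ℕ)) (K : Set (Fin n → ℝ))
    (hd : ∀ α ∈ A, (∑ j, α j) < d) (y : (Fin n → ℕ) → ℝ)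
    (z : (Fin n → ℕ) → ℝ)
    (hz : z ∈ Set.extremePoints ℝ (extensionSet n d A K y)) :
    ∀ μ : Measure (Fin n → ℝ), μ Kᶜ = 0 →
      (∀ α : Fin n → ℕ, (∑ j, α j) ≤ d →
        Integrable (fun x => ∏ j, x j ^ α j) μ ∧
          z α = ∫ x, ∏ j, x j ^ α j ∂μ) →
      ∃ S : Finset (Fin n → ℝ), S.card ≤ A.card ∧ μ (↑S : Set (Fin n → ℝ))ᶜ = 0 := by
  intro μ hμK hμ
  have hpoly := polyEval_mem_monomialSpan_sup_aeNull hd fun β hβ =>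
    monomialFn_mem_monomialSpan_sup_aeNull hd hz hμK hμ hβ
  obtain ⟨T, hT, hμT⟩ := exists_finset_card_le_finrank_of_polyEval_mem hpoly
  exact ⟨T, hT.trans (finrank_monomialSpan_le A), hμT⟩

/-- If `z` is an extreme point of `E_d(y,K)` (`d > deg(A)`,
`y` admitting a `K`-measure), then every `K`-measure representing `z` is
`r`-atomic with `r ≤ |A|`: it vanishes outside a finite set of at most
`|A|` points. -/
theorem measure_of_extremePoint_is_finitely_atomic
    (n d : ℕ) (A : Finset (Fin n → ℕ)) (K : Set (Fin n → ℝ))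
    (hd : ∀ α ∈ A, (∑ j, α j) < d) (y : (Fin n → ℕ) → ℝ)
    (hy : ∃ μ : Measure (Fin n → ℝ), μ Kᶜ = 0 ∧
      ∀ α ∈ A, Integrable (fun x => ∏ j, x j ^ α j) μ ∧
        y α = ∫ x, ∏ j, x j ^ α j ∂μ)
    (z : (Fin n → ℕ) → ℝ)
    (hz : z ∈ Set.extremePoints ℝ (extensionSet n d A K y)) :
    ∀ μ : Measure (Fin n → ℝ), μ Kᶜ = 0 →
      (∀ α : Fin n → ℕ, (∑ j, α j) ≤ d →
        Integrable (fun x => ∏ j, x j ^ α j) μ ∧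
          z α = ∫ x, ∏ j, x j ^ α j ∂μ) →
      ∃ S : Finset (Fin n → ℝ), S.card ≤ A.card ∧ μ (↑S : Set (Fin n → ℝ))ᶜ = 0 :=
  measure_of_extremePoint_is_finitely_atomic_general n d A K hd y z hz
end

section
/- Let A ⊆ ℕ^n be finite, d > deg(A), and suppose for every β ∈ ℕ^n_d \ A there exist real coefficients p_{β,α} such that the polynomial p_β := x^β − Σ_{α∈A} p_{β,α} x^α is given. Then the ideal J generated by the polynomials { p_β : β ∈ ℕ^n_d \ A } is zero-dimensional, and dim ℝ[x]/J ≤ |A|. -/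
/-! Let `V` be the span of the classes of `x^α`, `α ∈ A`, in `ℝ[x]/J`. Every `x^β` with
`|β| ≤ d` lies in `V`: either `β ∈ A`, or `p_β ∈ J` rewrites it as a combination of the `x^α`.
Since `|α| < d`, each `x_i x^α` has degree `≤ d`, so `V` is stable under multiplication by the
generators `x_i`; as it contains `1 = x^0`, it is the whole quotient, which is therefore
spanned by `|A|` vectors. -/

open MvPolynomial

/-- The ideal generated by the polynomials `p_β = x^β - ∑_{α ∈ A} p_{β,α} x^α`
for `β ∈ ℕ^n_d \ A`. -/
noncomputable def reductionIdeal (n d : ℕ) (A : Finset (Fin n →₀ ℕ))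
    (pc : (Fin n →₀ ℕ) → (Fin n →₀ ℕ) → ℝ) : Ideal (MvPolynomial (Fin n) ℝ) :=
  Ideal.span {q | ∃ β : Fin n →₀ ℕ, (β.sum fun _ e => e) ≤ d ∧ β ∉ A ∧
    q = monomial β 1 - ∑ α ∈ A, C (pc β α) * monomial α 1}

theorem Submodule.eq_top_of_one_mem_of_mul_mem {R S : Type*} [CommSemiring R] [Semiring S]
    [Algebra R S] {s : Set S} (hs : Algebra.adjoin R s = ⊤) (V : Submodule R S)
    (h1 : (1 : S) ∈ V) (hmul : ∀ x ∈ s, ∀ v ∈ V, x * v ∈ V) : V = ⊤ := by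
  have mul_mem_of_mem : ∀ y : S, ∀ v ∈ V, y * v ∈ V := fun y => by
    induction (hs ▸ Algebra.mem_top : y ∈ Algebra.adjoin R s) using Algebra.adjoin_induction with
    | mem x hx => exact hmul x hx
    | algebraMap r => exact fun v hv => by simpa [Algebra.smul_def] using V.smul_mem r hv
    | add x y _ _ hx hy => exact fun v hv => by simpa [add_mul] using V.add_mem (hx v hv) (hy v hv)
    | mul x y _ _ hx hy => exact fun v hv => by simpa [mul_assoc] using hx _ (hy v hv)
  exact eq_top_iff.mpr fun y _ => by simpa using mul_mem_of_mem y 1 h1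

theorem Ideal.Quotient.adjoin_range_mk_X_eq_top {R σ : Type*} [CommRing R]
    (J : Ideal (MvPolynomial σ R)) :
    Algebra.adjoin R (Set.range fun i => Ideal.Quotient.mk J (X i)) = ⊤ := by
  have := Algebra.adjoin_image (f := Ideal.Quotient.mkₐ R J) (s := Set.range X)
  rw [adjoin_range_X, Algebra.map_top,
    (AlgHom.range_eq_top _).mpr (Ideal.Quotient.mkₐ_surjective R J), ← Set.range_comp] at this
  exact this

namespace reductionIdeal

variable {n d : ℕ} {A : Finset (Fin n →₀ ℕ)} {pc : (Fin n →₀ ℕ) → (Fin n →₀ ℕ) → ℝ}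

noncomputable abbrev monomialSpan (n d : ℕ) (A : Finset (Fin n →₀ ℕ))
    (pc : (Fin n →₀ ℕ) → (Fin n →₀ ℕ) → ℝ) :
    Submodule ℝ (MvPolynomial (Fin n) ℝ ⧸ reductionIdeal n d A pc) :=
  Submodule.span ℝ (Set.range fun α : A => Ideal.Quotient.mk _ (monomial α.1 1))

theorem mk_monomial_mem_monomialSpan {β : Fin n →₀ ℕ} (hβ : β.degree ≤ d) :
    Ideal.Quotient.mk _ (monomial β 1) ∈ monomialSpan n d A pc := by
  by_cases hA : β ∈ A
  · exact Submodule.subset_span ⟨⟨β, hA⟩, rfl⟩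
  have hgen : monomial β 1 - ∑ α ∈ A, C (pc β α) * monomial α 1 ∈ reductionIdeal n d A pc :=
    Ideal.subset_span ⟨β, hβ, hA, rfl⟩
  rw [← Ideal.Quotient.eq, map_sum] at hgen
  rw [hgen]
  refine Submodule.sum_mem _ fun α hα => ?_
  rw [C_mul', ← Ideal.Quotient.mkₐ_eq_mk ℝ, map_smul]
  exact Submodule.smul_mem _ _ (Submodule.subset_span ⟨⟨α, hα⟩, rfl⟩)

theorem mk_X_mul_mem_monomialSpan (hd : ∀ α ∈ A, α.degree < d) (i : Fin n) {v}
    (hv : v ∈ monomialSpan n d A pc) :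
    Ideal.Quotient.mk _ (X i) * v ∈ monomialSpan n d A pc := by
  induction hv using Submodule.span_induction with
  | mem _ hx =>
    obtain ⟨α, rfl⟩ := hx
    rw [← map_mul, X, monomial_mul, one_mul]
    apply mk_monomial_mem_monomialSpan
    have := hd α α.2
    simp only [map_add, Finsupp.degree_single]
    omega
  | zero => simp
  | add x y _ _ hx hy => rw [mul_add]; exact Submodule.add_mem _ hx hy
  | smul r x _ hx => rw [mul_smul_comm]; exact Submodule.smul_mem _ _ hx

theorem monomialSpan_eq_top (hd : ∀ α ∈ A, α.degree < d) : monomialSpan n d A pc = ⊤ := by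
  refine Submodule.eq_top_of_one_mem_of_mul_mem
    (Ideal.Quotient.adjoin_range_mk_X_eq_top _) _ ?_ ?_
  · simpa using mk_monomial_mem_monomialSpan (β := 0) (A := A) (pc := pc) (by simp)
  · rintro _ ⟨i, rfl⟩ v hv
    exact mk_X_mul_mem_monomialSpan hd i hv

end reductionIdeal

/-- If `d > deg(A)`, the ideal generated by the polynomials
`p_β = x^β - ∑_{α∈A} p_{β,α} x^α` (for all `β ∈ ℕ^n_d \ A`) is zero-dimensional
and the quotient ring has dimension at most `|A|`. -/
theorem reductionIdeal_zero_dimensional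
    (n d : ℕ) (A : Finset (Fin n →₀ ℕ))
    (hd : ∀ α ∈ A, (α.sum fun _ e => e) < d)
    (pc : (Fin n →₀ ℕ) → (Fin n →₀ ℕ) → ℝ) :
    FiniteDimensional ℝ (MvPolynomial (Fin n) ℝ ⧸ reductionIdeal n d A pc) ∧
    Module.finrank ℝ (MvPolynomial (Fin n) ℝ ⧸ reductionIdeal n d A pc) ≤ A.card := by
  -- `Finsupp.degree α` unfolds to `α.sum fun _ e => e`, so `hd` applies as it stands.
  have hspan := reductionIdeal.monomialSpan_eq_top (pc := pc) hd
  exact ⟨Module.finite_def.mpr (hspan ▸ Submodule.fg_span (Set.finite_range _)),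
    by simpa using finrank_le_of_span_eq_top hspan⟩
end

section
/- Let ρ > 0 and let w ∈ ℝ^{ℕ^n_{2k}} be a truncated moment sequence with M_k(w) ⪰ 0 and L^{(k)}_b(w) ⪰ 0 where b = ρ² − ‖x‖². Then for each t = 0, 1, ..., k, the Riesz functional satisfies L_w(‖x‖^{2t}) ≤ ρ^{2t} w_0, and consequently ‖w|_{2t}‖_2 ≤ Tr(M_t(w)) ≤ (1 + ρ² + ··· + ρ^{2t}) w_0. -/
/-!
If `q` is a sum of squares of polynomials of degree `≤ d < k`, the localizing condition gives
`L((ρ² - ‖x‖²) q) ≥ 0`, i.e. `L(‖x‖² q) ≤ ρ² L(q)`. Since `‖x‖^{2t}` is such a sum of squares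
(`‖x‖² p² = ∑ⱼ (xⱼ p)²`), iterating gives `L(‖x‖^{2t}) ≤ ρ^{2t} w₀`.

For the single square `q = (x^β)²` the same inequality reads `∑ⱼ w_{2β+2eⱼ} ≤ ρ² w_{2β}`. Every
nonzero `α` with `|α| ≤ t+1` is some `β + eⱼ` with `|β| ≤ t`, and the `w_{2α}` are nonnegative, so
`T_t = ∑_{|α|≤t} w_{2α} = Tr M_t(w)` satisfies `T_{t+1} ≤ w₀ + ρ² T_t`, whence the geometric bound.

Finally every `α` with `|α| ≤ 2t` splits as `β + γ` with `|β|, |γ| ≤ t`, and Cauchy–Schwarz for the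
positive semidefinite form `(p, q) ↦ L(pq)` gives `w_{β+γ}² ≤ w_{2β} w_{2γ}`, so
`∑_{|α|≤2t} w_α² ≤ T_t²`.
-/

open MeasureTheory MvPolynomial

/-- The Riesz functional of a (truncated) multisequence `w`, applied to a
polynomial `q`: `L_w(q) = ∑_α q_α w_α`. -/
noncomputable def riesz {n : ℕ} (w : (Fin n →₀ ℕ) → ℝ)
    (q : MvPolynomial (Fin n) ℝ) : ℝ :=
  ∑ α ∈ q.support, coeff α q * w α

/-- The finite set of exponents `α ∈ ℕ^n` with `|α| ≤ t`. -/
noncomputable def degLE (n t : ℕ) : Finset (Fin n →₀ ℕ) :=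
  ((Fintype.piFinset fun _ : Fin n => Finset.range (t + 1)).filter
    (fun f => ∑ j, f j ≤ t)).image (fun f => Finsupp.equivFunOnFinite.symm f)

lemma riesz_eq_constr {n : ℕ} (w : (Fin n →₀ ℕ) → ℝ) :
    riesz w = (basisMonomials (Fin n) ℝ).constr ℝ w := by
  ext q
  rw [Module.Basis.constr_apply]
  rfl

lemma constr_basisMonomials_monomial {σ : Type*} (w : (σ →₀ ℕ) → ℝ) (α : σ →₀ ℕ) :
    (basisMonomials σ ℝ).constr ℝ w (monomial α 1) = w α := by
  simpa using (basisMonomials σ ℝ).constr_basis ℝ w α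

lemma monomial_one_sq {σ R : Type*} [CommSemiring R] (α : σ →₀ ℕ) :
    monomial α (1 : R) ^ 2 = monomial (α + α) 1 := by
  rw [sq, monomial_mul, one_mul]

section SumsOfSquares

variable {σ : Type*}

noncomputable def sumSqDegLE (σ : Type*) (d : ℕ) : AddSubmonoid (MvPolynomial σ ℝ) :=
  AddSubmonoid.closure ((· ^ 2) '' {p | p.totalDegree ≤ d})

lemma sq_mem_sumSqDegLE {d : ℕ} {p : MvPolynomial σ ℝ} (hp : p.totalDegree ≤ d) :
    p ^ 2 ∈ sumSqDegLE σ d :=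
  AddSubmonoid.subset_closure ⟨p, hp, rfl⟩

lemma map_mul_nonneg_of_mem_sumSqDegLE (L : MvPolynomial σ ℝ →ₗ[ℝ] ℝ) {g q : MvPolynomial σ ℝ}
    {d : ℕ} (h : ∀ p : MvPolynomial σ ℝ, p.totalDegree ≤ d → 0 ≤ L (g * p ^ 2))
    (hq : q ∈ sumSqDegLE σ d) : 0 ≤ L (g * q) := by
  induction hq using AddSubmonoid.closure_induction with
  | mem q hq => obtain ⟨p, hp, rfl⟩ := hq; exact h p hp
  | zero => simp
  | add q r _ _ hq hr => rw [mul_add, map_add]; exact add_nonneg hq hr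

variable [Fintype σ]

lemma sqNorm_mul_mem_sumSqDegLE {d : ℕ} {q : MvPolynomial σ ℝ} (hq : q ∈ sumSqDegLE σ d) :
    (∑ j, X j ^ 2) * q ∈ sumSqDegLE σ (d + 1) := by
  induction hq using AddSubmonoid.closure_induction with
  | mem q hq =>
    obtain ⟨p, hp : p.totalDegree ≤ d, rfl⟩ := hq
    rw [Finset.sum_mul]
    refine sum_mem fun j _ => ?_
    rw [← mul_pow]
    refine sq_mem_sumSqDegLE ((totalDegree_mul _ _).trans ?_)
    rw [totalDegree_X]
    omega
  | zero => simp
  | add q r _ _ hq hr => rw [mul_add]; exact add_mem hq hr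

lemma sqNorm_pow_mem_sumSqDegLE (t : ℕ) :
    (∑ j, X j ^ 2 : MvPolynomial σ ℝ) ^ t ∈ sumSqDegLE σ t := by
  induction t with
  | zero => simpa using sq_mem_sumSqDegLE (σ := σ) (d := 0) (p := 1) (by simp)
  | succ t ih => rw [pow_succ']; exact sqNorm_mul_mem_sumSqDegLE ih

end SumsOfSquares

section PositiveFunctional

variable {σ : Type*}

/-- `M_k ⪰ 0`, read through `pᵀ M_k p = L(p²)`. -/
def MomentPSD (L : MvPolynomial σ ℝ →ₗ[ℝ] ℝ) (k : ℕ) : Prop :=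
  ∀ p : MvPolynomial σ ℝ, p.totalDegree ≤ k → 0 ≤ L (p ^ 2)

/-- `L_b^{(k)} ⪰ 0` for `b = ρ² - ‖x‖²`, read through `pᵀ L_b^{(k)} p = L(b p²)`. -/
def BallLocalizingPSD [Fintype σ] (L : MvPolynomial σ ℝ →ₗ[ℝ] ℝ) (ρ : ℝ) (k : ℕ) : Prop :=
  ∀ p : MvPolynomial σ ℝ, p.totalDegree + 1 ≤ k → 0 ≤ L ((C (ρ ^ 2) - ∑ j, X j ^ 2) * p ^ 2)

variable {L : MvPolynomial σ ℝ →ₗ[ℝ] ℝ} {k : ℕ}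

lemma MomentPSD.map_monomial_add_self_nonneg (hM : MomentPSD L k) {α : σ →₀ ℕ}
    (hα : α.degree ≤ k) : 0 ≤ L (monomial (α + α) 1) := by
  rw [← monomial_one_sq]
  exact hM _ ((totalDegree_monomial_le α 1).trans hα)

lemma MomentPSD.sq_map_mul_le (hM : MomentPSD L k) {p q : MvPolynomial σ ℝ}
    (hp : p.totalDegree ≤ k) (hq : q.totalDegree ≤ k) :
    L (p * q) ^ 2 ≤ L (p ^ 2) * L (q ^ 2) := by
  have hquad : ∀ x : ℝ, 0 ≤ L (p ^ 2) * (x * x) + 2 * L (p * q) * x + L (q ^ 2) := fun x => by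
    have hdeg : (C x * p + q).totalDegree ≤ k := by
      refine (totalDegree_add _ _).trans (max_le ((totalDegree_mul _ _).trans ?_) hq)
      rwa [totalDegree_C, zero_add]
    have hexp : (C x * p + q) ^ 2 = C (x * x) * p ^ 2 + C (2 * x) * (p * q) + q ^ 2 := by
      simp only [map_mul, map_ofNat]
      ring
    have h := hM _ hdeg
    rw [hexp, map_add, map_add, C_mul', C_mul', map_smul, map_smul, smul_eq_mul, smul_eq_mul] at h
    linarith
  have hdiscr := discrim_le_zero hquad
  rw [discrim] at hdiscr
  nlinarith

lemma MomentPSD.sq_map_monomial_add_le (hM : MomentPSD L k) {β γ : σ →₀ ℕ}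
    (hβ : β.degree ≤ k) (hγ : γ.degree ≤ k) :
    L (monomial (β + γ) 1) ^ 2 ≤ L (monomial (β + β) 1) * L (monomial (γ + γ) 1) := by
  simpa only [monomial_mul, one_mul, monomial_one_sq] using
    hM.sq_map_mul_le ((totalDegree_monomial_le β 1).trans hβ)
      ((totalDegree_monomial_le γ 1).trans hγ)

variable [Fintype σ] {ρ : ℝ}

lemma BallLocalizingPSD.map_sqNorm_mul_le (hb : BallLocalizingPSD L ρ k) {d : ℕ}
    {q : MvPolynomial σ ℝ} (hq : q ∈ sumSqDegLE σ d) (hd : d + 1 ≤ k) :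
    L ((∑ j, X j ^ 2) * q) ≤ ρ ^ 2 * L q := by
  have h := map_mul_nonneg_of_mem_sumSqDegLE L (fun p hp => hb p (by omega)) hq
  rw [sub_mul, map_sub, C_mul', map_smul, smul_eq_mul] at h
  linarith

lemma BallLocalizingPSD.map_sqNorm_pow_le (hb : BallLocalizingPSD L ρ k) {t : ℕ}
    (ht : t ≤ k) : L ((∑ j, X j ^ 2) ^ t) ≤ ρ ^ (2 * t) * L 1 := by
  induction t with
  | zero => simp
  | succ t ih =>
    calc L ((∑ j, X j ^ 2) ^ (t + 1)) ≤ ρ ^ 2 * L ((∑ j, X j ^ 2) ^ t) := by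
          rw [pow_succ']; exact hb.map_sqNorm_mul_le (sqNorm_pow_mem_sumSqDegLE t) ht
      _ ≤ ρ ^ 2 * (ρ ^ (2 * t) * L 1) := by gcongr; exact ih (by omega)
      _ = ρ ^ (2 * (t + 1)) * L 1 := by ring

lemma BallLocalizingPSD.sum_map_monomial_single_add_le (hb : BallLocalizingPSD L ρ k)
    {β : σ →₀ ℕ} (hβ : β.degree + 1 ≤ k) :
    ∑ j, L (monomial ((Finsupp.single j 1 + β) + (Finsupp.single j 1 + β)) 1)
      ≤ ρ ^ 2 * L (monomial (β + β) 1) := by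
  have h := hb.map_sqNorm_mul_le (sq_mem_sumSqDegLE (totalDegree_monomial_le β 1)) hβ
  rw [monomial_one_sq, Finset.sum_mul, map_sum] at h
  have hX : ∀ j, X j ^ 2 * monomial (β + β) (1 : ℝ)
      = monomial ((Finsupp.single j 1 + β) + (Finsupp.single j 1 + β)) 1 := fun j => by
    rw [← monomial_one_sq, ← mul_pow, X, monomial_mul, one_mul, monomial_one_sq]
  simpa only [hX] using h

end PositiveFunctional

lemma Finsupp.exists_add_eq_of_degree_le_add {σ : Type*} {α : σ →₀ ℕ} {s r : ℕ}
    (h : α.degree ≤ s + r) : ∃ β γ, β + γ = α ∧ β.degree ≤ s ∧ γ.degree ≤ r := by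
  obtain ⟨β, hβα, hβ⟩ := α.exists_le_degree_eq (min s α.degree) (min_le_right _ _)
  obtain ⟨γ, rfl⟩ := le_iff_exists_add.mp hβα
  rw [map_add] at h hβ
  exact ⟨β, γ, rfl, by omega, by omega⟩

section Exponents

variable {n : ℕ}

lemma mem_degLE {t : ℕ} {α : Fin n →₀ ℕ} : α ∈ degLE n t ↔ α.degree ≤ t := by
  simp only [degLE, Finset.mem_image, Finset.mem_filter, Fintype.mem_piFinset,
    Finset.mem_range, Finsupp.degree_eq_sum]
  constructor
  · rintro ⟨f, ⟨-, hf⟩, rfl⟩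
    simpa using hf
  · intro h
    refine ⟨α, ⟨fun j => Nat.lt_succ_of_le ?_, h⟩, by simp⟩
    exact (α.le_degree j).trans (by rwa [Finsupp.degree_eq_sum])

lemma degLE_zero : degLE n 0 = {0} := by
  ext α
  simp [mem_degLE, Finsupp.degree_eq_zero_iff]

lemma degLE_succ (t : ℕ) : degLE n (t + 1) =
    insert 0 ((degLE n t ×ˢ Finset.univ).image fun p => Finsupp.single p.2 1 + p.1) := by
  ext α
  simp only [Finset.mem_insert, Finset.mem_image, Finset.mem_product, Finset.mem_univ,
    and_true, mem_degLE, Prod.exists]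
  constructor
  · intro hα
    rcases eq_or_ne α 0 with rfl | hα0
    · exact Or.inl rfl
    obtain ⟨j, hj⟩ : α.support.Nonempty := Finsupp.support_nonempty_iff.mpr hα0
    obtain ⟨β, rfl⟩ := le_iff_exists_add.mp (Finsupp.single_le_iff.mpr
      (Nat.one_le_iff_ne_zero.mpr (Finsupp.mem_support_iff.mp hj)))
    rw [map_add, Finsupp.degree_single] at hα
    exact Or.inr ⟨β, j, by omega, rfl⟩
  · rintro (rfl | ⟨β, j, hβ, rfl⟩)
    · simp
    · rw [map_add, Finsupp.degree_single]
      omega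

lemma degLE_add_subset (s r : ℕ) :
    degLE n (s + r) ⊆ (degLE n s ×ˢ degLE n r).image fun p => p.1 + p.2 := by
  intro α hα
  obtain ⟨β, γ, rfl, hβ, hγ⟩ := Finsupp.exists_add_eq_of_degree_le_add (mem_degLE.mp hα)
  exact Finset.mem_image.mpr
    ⟨(β, γ), Finset.mem_product.mpr ⟨mem_degLE.mpr hβ, mem_degLE.mpr hγ⟩, rfl⟩

end Exponents

section MomentSums

variable {n k : ℕ} {L : MvPolynomial (Fin n) ℝ →ₗ[ℝ] ℝ}

lemma MomentPSD.sqrt_sum_sq_map_monomial_le (hM : MomentPSD L k) {t : ℕ} (ht : t ≤ k) :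
    √(∑ α ∈ degLE n (2 * t), L (monomial α 1) ^ 2) ≤ ∑ α ∈ degLE n t, L (monomial (α + α) 1) := by
  have hdeg : ∀ α ∈ degLE n t, α.degree ≤ k := fun α hα => (mem_degLE.mp hα).trans ht
  refine Real.sqrt_le_iff.mpr
    ⟨Finset.sum_nonneg fun α hα => hM.map_monomial_add_self_nonneg (hdeg α hα), ?_⟩
  calc ∑ α ∈ degLE n (2 * t), L (monomial α 1) ^ 2
      ≤ ∑ α ∈ (degLE n t ×ˢ degLE n t).image (fun p => p.1 + p.2), L (monomial α 1) ^ 2 :=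
        Finset.sum_le_sum_of_subset_of_nonneg (two_mul t ▸ degLE_add_subset t t)
          fun _ _ _ => sq_nonneg _
    _ ≤ ∑ p ∈ degLE n t ×ˢ degLE n t, L (monomial (p.1 + p.2) 1) ^ 2 :=
        Finset.sum_image_le_of_nonneg fun _ _ => sq_nonneg _
    _ ≤ ∑ p ∈ degLE n t ×ˢ degLE n t, L (monomial (p.1 + p.1) 1) * L (monomial (p.2 + p.2) 1) :=
        Finset.sum_le_sum fun p hp => hM.sq_map_monomial_add_le
          (hdeg _ (Finset.mem_product.mp hp).1) (hdeg _ (Finset.mem_product.mp hp).2)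
    _ = (∑ α ∈ degLE n t, L (monomial (α + α) 1)) ^ 2 := by
        rw [sq, Finset.sum_mul_sum, Finset.sum_product]

variable {ρ : ℝ} (hM : MomentPSD L k) (hb : BallLocalizingPSD L ρ k)
include hM hb

lemma sum_degLE_succ_map_monomial_le {t : ℕ} (ht : t + 1 ≤ k) :
    ∑ α ∈ degLE n (t + 1), L (monomial (α + α) 1)
      ≤ L 1 + ρ ^ 2 * ∑ β ∈ degLE n t, L (monomial (β + β) 1) := by
  have hzero : (0 : Fin n →₀ ℕ) ∉
      (degLE n t ×ˢ Finset.univ).image fun p => Finsupp.single p.2 1 + p.1 := by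
    simp
  have hnonneg : ∀ α ∈ (degLE n t ×ˢ Finset.univ).image fun p => Finsupp.single p.2 1 + p.1,
      0 ≤ L (monomial (α + α) 1) := by
    intro α hα
    have hα' : α ∈ degLE n (t + 1) := by rw [degLE_succ]; exact Finset.mem_insert_of_mem hα
    exact hM.map_monomial_add_self_nonneg ((mem_degLE.mp hα').trans ht)
  rw [degLE_succ, Finset.sum_insert hzero, add_zero, ← one_def]
  refine add_le_add le_rfl ((Finset.sum_image_le_of_nonneg hnonneg).trans ?_)
  calc ∑ p ∈ degLE n t ×ˢ Finset.univ,
          L (monomial ((Finsupp.single p.2 1 + p.1) + (Finsupp.single p.2 1 + p.1)) 1)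
      = ∑ β ∈ degLE n t, ∑ j,
          L (monomial ((Finsupp.single j 1 + β) + (Finsupp.single j 1 + β)) 1) :=
        Finset.sum_product _ _ _
    _ ≤ ∑ β ∈ degLE n t, ρ ^ 2 * L (monomial (β + β) 1) := Finset.sum_le_sum fun β hβ =>
        hb.sum_map_monomial_single_add_le (by have := mem_degLE.mp hβ; omega)
    _ = ρ ^ 2 * ∑ β ∈ degLE n t, L (monomial (β + β) 1) := (Finset.mul_sum _ _ _).symm

lemma sum_degLE_map_monomial_le {t : ℕ} (ht : t ≤ k) :
    ∑ α ∈ degLE n t, L (monomial (α + α) 1) ≤ (∑ i ∈ Finset.range (t + 1), ρ ^ (2 * i)) * L 1 := by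
  induction t with
  | zero => simp [degLE_zero]
  | succ t ih =>
    calc _ ≤ L 1 + ρ ^ 2 * ∑ β ∈ degLE n t, L (monomial (β + β) 1) :=
          sum_degLE_succ_map_monomial_le hM hb ht
      _ ≤ L 1 + ρ ^ 2 * ((∑ i ∈ Finset.range (t + 1), ρ ^ (2 * i)) * L 1) := by
          gcongr; exact ih (by omega)
      _ = _ := by
          simp only [pow_mul]
          rw [geom_sum_succ (n := t + 1)]
          ring

end MomentSums

theorem moment_bounds_from_ball_localizing_general
    (n k : ℕ) (ρ : ℝ) (w : (Fin n →₀ ℕ) → ℝ)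
    (hM : ∀ p : MvPolynomial (Fin n) ℝ, p.totalDegree ≤ k → 0 ≤ riesz w (p ^ 2))
    (hb : ∀ p : MvPolynomial (Fin n) ℝ, p.totalDegree + 1 ≤ k →
      0 ≤ riesz w ((C (ρ ^ 2) - ∑ j, X j ^ 2) * p ^ 2)) :
    ∀ t ≤ k,
      riesz w ((∑ j, X j ^ 2) ^ t) ≤ ρ ^ (2 * t) * w 0 ∧
      Real.sqrt (∑ α ∈ degLE n (2 * t), (w α) ^ 2) ≤ ∑ α ∈ degLE n t, w (α + α) ∧
      ∑ α ∈ degLE n t, w (α + α) ≤ (∑ i ∈ Finset.range (t + 1), ρ ^ (2 * i)) * w 0 := by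
  intro t ht
  rw [riesz_eq_constr] at hM hb ⊢
  have hL1 : (basisMonomials (Fin n) ℝ).constr ℝ w 1 = w 0 := by
    rw [one_def, constr_basisMonomials_monomial]
  refine ⟨hL1 ▸ BallLocalizingPSD.map_sqNorm_pow_le hb ht, ?_, ?_⟩
  · simpa only [constr_basisMonomials_monomial] using
      MomentPSD.sqrt_sum_sq_map_monomial_le hM ht
  · simpa only [constr_basisMonomials_monomial, hL1] using
      sum_degLE_map_monomial_le (ρ := ρ) hM hb ht

/-- If `M_k(w) ⪰ 0` and `L^{(k)}_b(w) ⪰ 0` with `b = ρ² - ‖x‖²`,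
then for each `t ≤ k`: `L_w(‖x‖^{2t}) ≤ ρ^{2t} w_0`, and
`‖w|_{2t}‖₂ ≤ Tr(M_t(w)) ≤ (1 + ρ² + ⋯ + ρ^{2t}) w_0`,
where `Tr(M_t(w)) = ∑_{|α| ≤ t} w_{2α}`. -/
theorem moment_bounds_from_ball_localizing
    (n k : ℕ) (ρ : ℝ) (hρ : 0 < ρ) (w : (Fin n →₀ ℕ) → ℝ)
    (hM : ∀ p : MvPolynomial (Fin n) ℝ, p.totalDegree ≤ k → 0 ≤ riesz w (p ^ 2))
    (hb : ∀ p : MvPolynomial (Fin n) ℝ, p.totalDegree + 1 ≤ k →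
      0 ≤ riesz w ((C (ρ ^ 2) - ∑ j, X j ^ 2) * p ^ 2)) :
    ∀ t ≤ k,
      riesz w ((∑ j, X j ^ 2) ^ t) ≤ ρ ^ (2 * t) * w 0 ∧
      Real.sqrt (∑ α ∈ degLE n (2 * t), (w α) ^ 2) ≤ ∑ α ∈ degLE n t, w (α + α) ∧
      ∑ α ∈ degLE n t, w (α + α) ≤ (∑ i ∈ Finset.range (t + 1), ρ ^ (2 * i)) * w 0 :=
  moment_bounds_from_ball_localizing_general n k ρ w hM hb
end

section
/- Let K ⊆ ℝ^n be a compact set, A ⊆ ℕ^n finite, and suppose there exist p̂ ∈ ℝ[x]_A with p̂ > 0 on K and ⟨p̂, y⟩ < 0, and R ∈ ℝ[x]_d with d > deg(A). Then the optimization problem max{ ⟨p, y⟩ : p ∈ ℝ[x]_A, R − p ≥ 0 on K } has optimal value +∞. -/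
open MvPolynomial

/-- If `K` is compact and there exists `p̂ ∈ ℝ[x]_A` with
`p̂ > 0` on `K` and `⟨p̂, y⟩ < 0`, then for any `R ∈ ℝ[x]_d` (`d > deg(A)`) the
problem `max { ⟨p, y⟩ : p ∈ ℝ[x]_A, R - p ≥ 0 on K }` has optimal value `+∞`:
feasible values exceed every bound. -/
theorem dual_unbounded_of_separating_poly
    (n d : ℕ) (A : Finset (Fin n →₀ ℕ)) (K : Set (Fin n → ℝ)) (hK : IsCompact K)
    (hdA : ∀ α ∈ A, (α.sum fun _ e => e) < d)
    (y : (Fin n →₀ ℕ) → ℝ) (phat : (Fin n →₀ ℕ) → ℝ)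
    (hpos : ∀ x ∈ K, 0 < ∑ α ∈ A, phat α * ∏ j, x j ^ α j)
    (hneg : ∑ α ∈ A, phat α * y α < 0)
    (R : MvPolynomial (Fin n) ℝ) (hRd : R.totalDegree ≤ d) :
    ∀ M : ℝ, ∃ p : (Fin n →₀ ℕ) → ℝ,
      (∀ x ∈ K, ∑ α ∈ A, p α * ∏ j, x j ^ α j ≤ eval x R) ∧
      M < ∑ α ∈ A, p α * y α := by
  intro M
  set S : ℝ := ∑ α ∈ A, phat α * y α with hS
  set f : (Fin n → ℝ) → ℝ := fun x => ∑ α ∈ A, phat α * ∏ j, x j ^ α j with hf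
  have hfc : Continuous f := by
    apply continuous_finset_sum
    intro α _
    exact continuous_const.mul (continuous_finset_prod _ fun j _ =>
      (continuous_apply j).pow _)
  have hgc : Continuous fun x : Fin n → ℝ => eval x R := R.continuous_eval
  -- choose η
  have key : ∀ η : ℝ, 0 ≤ η → (∀ x ∈ K, η * f x ≥ -(eval x R)) →
      ∃ p : (Fin n →₀ ℕ) → ℝ,
        (∀ x ∈ K, ∑ α ∈ A, p α * ∏ j, x j ^ α j ≤ eval x R) ∧
        (∑ α ∈ A, p α * y α) = -η * S := by
    intro η _ hfeas
    refine ⟨fun α => -η * phat α, ?_, ?_⟩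
    · intro x hx
      have : ∑ α ∈ A, (-η * phat α) * ∏ j, x j ^ α j = -η * f x := by
        rw [hf, Finset.mul_sum]; exact Finset.sum_congr rfl fun α _ => by ring
      rw [this]
      have := hfeas x hx
      linarith
    · rw [hS, Finset.mul_sum]; exact Finset.sum_congr rfl fun α _ => by ring
  have hSneg : 0 < -S := by linarith
  rcases Set.eq_empty_or_nonempty K with hKe | hKe
  · set η : ℝ := max 0 ((M + 1) / (-S)) with hη
    obtain ⟨p, hp1, hp2⟩ := key η (le_max_left _ _)
      (by intro x hx; rw [hKe] at hx; exact hx.elim)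
    refine ⟨p, hp1, ?_⟩
    rw [hp2]
    have hη2 : (M + 1) / (-S) ≤ η := le_max_right _ _
    have : M + 1 ≤ η * (-S) := (div_le_iff₀ hSneg).mp hη2
    nlinarith
  · obtain ⟨x₀, hx₀, hmin⟩ := hK.exists_isMinOn hKe hfc.continuousOn
    obtain ⟨x₁, hx₁, hminR⟩ := hK.exists_isMinOn hKe hgc.continuousOn
    set ε : ℝ := f x₀ with hε
    have hεpos : 0 < ε := hpos x₀ hx₀
    set c : ℝ := eval x₁ R with hc
    set η : ℝ := max ((-c) / ε) (max 0 ((M + 1) / (-S))) with hη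
    have hη0 : 0 ≤ η := le_trans (le_max_left _ _) (le_max_right _ _)
    have hfeas : ∀ x ∈ K, η * f x ≥ -(eval x R) := by
      intro x hx
      have h1 : ε ≤ f x := hmin hx
      have h2 : c ≤ eval x R := hminR hx
      have h3 : (-c) / ε ≤ η := le_max_left _ _
      have h4 : -c ≤ η * ε := (div_le_iff₀ hεpos).mp h3
      have h5 : η * ε ≤ η * f x := by nlinarith
      linarith
    obtain ⟨p, hp1, hp2⟩ := key η hη0 hfeas
    refine ⟨p, hp1, ?_⟩
    rw [hp2]
    have hη2 : (M + 1) / (-S) ≤ η := le_trans (le_max_right _ _) (le_max_right _ _)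
    have : M + 1 ≤ η * (-S) := (div_le_iff₀ hSneg).mp hη2
    nlinarith
end

section
/- Let F ⊆ ℝ^N be a nonempty compact convex set. Then the set Θ of vectors R ∈ ℝ^N such that the linear functional z ↦ ⟨R, z⟩ has more than one minimizer on F has Lebesgue measure zero in ℝ^N; equivalently, for almost every R ∈ ℝ^N the minimizer of ⟨R, ·⟩ over F is unique. -/
/-!
The function `φ R = min_{z ∈ F} ⟨R, z⟩` is an infimum of uniformly Lipschitz linear functions,
hence Lipschitz, hence differentiable almost everywhere by Rademacher's theorem. If `z` minimizes
`⟨R, ·⟩` on `F`, then `⟨·, z⟩ - φ` is nonnegative and vanishes at `R`, so wherever `φ` is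
differentiable its gradient at `R` is `z`. Two distinct minimizers can therefore only occur at
the null set of points where `φ` is not differentiable.
-/

open MeasureTheory Set
open scoped NNReal

theorem LipschitzWith.ciInf {α ι : Type*} [PseudoMetricSpace α] {f : ι → α → ℝ} {K : ℝ≥0}
    (hf : ∀ i, LipschitzWith K (f i)) (hbdd : ∀ x, BddBelow (range fun i ↦ f i x)) :
    LipschitzWith K fun x ↦ ⨅ i, f i x := by
  cases isEmpty_or_nonempty ι
  · simpa only [Real.iInf_of_isEmpty] using LipschitzWith.const' (α := α) (0 : ℝ)
  refine LipschitzWith.of_le_add_mul K fun x y ↦ ?_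
  rw [← sub_le_iff_le_add]
  exact le_ciInf fun i ↦ sub_le_iff_le_add.mpr <|
    (ciInf_le (hbdd x) i).trans ((hf i).le_add_mul x y)

section

variable {E : Type*} [NormedAddCommGroup E] [NormedSpace ℝ E]

theorem fderiv_eq_of_le_of_eq {f g : E → ℝ} {x : E} (hf : DifferentiableAt ℝ f x)
    (hg : DifferentiableAt ℝ g x) (hle : ∀ y, f y ≤ g y) (heq : f x = g x) :
    fderiv ℝ f x = fderiv ℝ g x := by
  have hmin : IsLocalMin (g - f) x :=
    Filter.Eventually.of_forall fun y ↦ by simp only [Pi.sub_apply, heq, sub_self, sub_nonneg, hle]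
  rw [eq_comm, ← sub_eq_zero, ← fderiv_sub hg hf]
  exact hmin.fderiv_eq_zero

namespace ContinuousLinearMap

noncomputable def infApply (F : Set (E →L[ℝ] ℝ)) (x : E) : ℝ :=
  ⨅ ℓ : F, (ℓ : E →L[ℝ] ℝ) x

variable {F : Set (E →L[ℝ] ℝ)} {C : ℝ≥0}

theorem bddBelow_range_apply (hC : ∀ ℓ ∈ F, ‖ℓ‖₊ ≤ C) (x : E) :
    BddBelow (range fun ℓ : F ↦ (ℓ : E →L[ℝ] ℝ) x) := by
  refine ⟨-(C * ‖x‖), ?_⟩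
  rintro _ ⟨ℓ, rfl⟩
  exact (abs_le.mp (ℓ.1.le_of_opNorm_le (hC ℓ ℓ.2) x)).1

theorem lipschitzWith_infApply (hC : ∀ ℓ ∈ F, ‖ℓ‖₊ ≤ C) : LipschitzWith C (infApply F) :=
  .ciInf (fun ℓ ↦ ℓ.1.lipschitz.weaken (hC ℓ ℓ.2)) (bddBelow_range_apply hC)

theorem infApply_le (hC : ∀ ℓ ∈ F, ‖ℓ‖₊ ≤ C) {ℓ : E →L[ℝ] ℝ} (hℓ : ℓ ∈ F) (x : E) :
    infApply F x ≤ ℓ x :=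
  ciInf_le (bddBelow_range_apply hC x) ⟨ℓ, hℓ⟩

theorem infApply_eq_of_isMinOn {ℓ : E →L[ℝ] ℝ} {x : E} (hℓ : ℓ ∈ F)
    (hmin : IsMinOn (fun ℓ' : E →L[ℝ] ℝ ↦ ℓ' x) F ℓ) : infApply F x = ℓ x :=
  hmin.iInf_eq hℓ

theorem fderiv_infApply_eq_of_isMinOn (hC : ∀ ℓ ∈ F, ‖ℓ‖₊ ≤ C) {ℓ : E →L[ℝ] ℝ} {x : E}
    (hℓ : ℓ ∈ F) (hmin : IsMinOn (fun ℓ' : E →L[ℝ] ℝ ↦ ℓ' x) F ℓ)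
    (hx : DifferentiableAt ℝ (infApply F) x) : fderiv ℝ (infApply F) x = ℓ := by
  rw [fderiv_eq_of_le_of_eq hx ℓ.differentiableAt (infApply_le hC hℓ)
    (infApply_eq_of_isMinOn hℓ hmin), ℓ.fderiv]

theorem measure_setOf_two_minimizers_eq_zero [FiniteDimensional ℝ E] [MeasurableSpace E]
    [BorelSpace E] (μ : Measure E) [μ.IsAddHaarMeasure] (hF : Bornology.IsBounded F) :
    μ {x | ∃ ℓ₁ ∈ F, ∃ ℓ₂ ∈ F, ℓ₁ ≠ ℓ₂ ∧ IsMinOn (fun ℓ : E →L[ℝ] ℝ ↦ ℓ x) F ℓ₁ ∧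
      IsMinOn (fun ℓ : E →L[ℝ] ℝ ↦ ℓ x) F ℓ₂} = 0 := by
  obtain ⟨C, hC0, hC⟩ := hF.exists_pos_norm_le
  have hC' : ∀ ℓ ∈ F, ‖ℓ‖₊ ≤ C.toNNReal := fun ℓ hℓ ↦
    (Real.le_toNNReal_iff_coe_le hC0.le).mpr (hC ℓ hℓ)
  have hdiff : ∀ᵐ x ∂μ, DifferentiableAt ℝ (infApply F) x :=
    (lipschitzWith_infApply hC').ae_differentiableAt
  refine measure_mono_null ?_ (ae_iff.mp hdiff)
  rintro x ⟨ℓ₁, h₁, ℓ₂, h₂, hne, hmin₁, hmin₂⟩ hx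
  exact hne <| (fderiv_infApply_eq_of_isMinOn hC' h₁ hmin₁ hx).symm.trans
    (fderiv_infApply_eq_of_isMinOn hC' h₂ hmin₂ hx)

end ContinuousLinearMap

end

theorem measure_zero_of_nonunique_minimizers_general
    (N : ℕ) (F : Set (Fin N → ℝ))
    (hcomp : IsCompact F) :
    volume {R : Fin N → ℝ | ∃ z₁ ∈ F, ∃ z₂ ∈ F, z₁ ≠ z₂ ∧
      (∀ z ∈ F, ∑ i, R i * z₁ i ≤ ∑ i, R i * z i) ∧
      (∀ z ∈ F, ∑ i, R i * z₂ i ≤ ∑ i, R i * z i)} = 0 := by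
  let T : (Fin N → ℝ) ≃L[ℝ] ((Fin N → ℝ) →L[ℝ] ℝ) :=
    ((dotProductEquiv ℝ (Fin N)).trans LinearMap.toContinuousLinearMap).toContinuousLinearEquiv
  have hT : ∀ z R, T z R = ∑ i, R i * z i := fun z R ↦ dotProduct_comm z R
  have hmin : ∀ {R z₀}, (∀ z ∈ F, ∑ i, R i * z₀ i ≤ ∑ i, R i * z i) →
      IsMinOn (fun ℓ : (Fin N → ℝ) →L[ℝ] ℝ ↦ ℓ R) (T '' F) (T z₀) := fun h ↦
    isMinOn_iff.mpr <| forall_mem_image.mpr fun z hz ↦ by simpa only [hT] using h z hz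
  refine measure_mono_null ?_ <| ContinuousLinearMap.measure_setOf_two_minimizers_eq_zero volume
    (hcomp.image T.continuous).isBounded
  rintro R ⟨z₁, h₁, z₂, h₂, hne, hmin₁, hmin₂⟩
  exact ⟨T z₁, mem_image_of_mem T h₁, T z₂, mem_image_of_mem T h₂, T.injective.ne hne,
    hmin hmin₁, hmin hmin₂⟩

/-- For a nonempty compact convex set `F ⊆ ℝ^N`, the set of
linear objectives `R` having more than one minimizer on `F` has Lebesgue
measure zero. -/
theorem measure_zero_of_nonunique_minimizers
    (N : ℕ) (F : Set (Fin N → ℝ)) (hne : F.Nonempty)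
    (hcomp : IsCompact F) (hconv : Convex ℝ F) :
    volume {R : Fin N → ℝ | ∃ z₁ ∈ F, ∃ z₂ ∈ F, z₁ ≠ z₂ ∧
      (∀ z ∈ F, ∑ i, R i * z₁ i ≤ ∑ i, R i * z i) ∧
      (∀ z ∈ F, ∑ i, R i * z₂ i ≤ ∑ i, R i * z i)} = 0 :=
  measure_zero_of_nonunique_minimizers_general N F hcomp
end
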